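/- arXiv:2204.06838 — 7 statements merged into one kernel-verified Lean document; each statement's English description precedes it below -/
import Mathlib

section
/- The set ℝ × ℝ equipped with the binary operation (r₁,r₂)*(s₁,s₂) = (r₁+s₁, r₂·e^{s₁}+s₂) (where e^{s₁} is the real exponential) and the lexicographic order is a non-abelian totally ordered dense group: it is a group with identity (0,0), the operation is not commutative, a < b implies a*c < b*c and c*a < c*b for all c, and for every element ε with (0,0) < ε there exist elements β, γ with (0,0) < β, (0,0) < γ and β*γ < ε. -/
/-- The binary operation `(r₁,r₂)*(s₁,s₂) = (r₁+s₁, r₂·e^{s₁}+s₂)` on `ℝ × ℝ`. -/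
noncomputable def stmt1Op (p q : ℝ × ℝ) : ℝ × ℝ := (p.1 + q.1, p.2 * Real.exp q.1 + q.2)

/-- The (strict) lexicographic order on `ℝ × ℝ`. -/
def stmt1Lt (p q : ℝ × ℝ) : Prop := p.1 < q.1 ∨ (p.1 = q.1 ∧ p.2 < q.2)

/-- `ℝ × ℝ` with the operation `stmt1Op` and the lexicographic order is a
non-abelian totally ordered dense group with identity `(0,0)`. -/
theorem stmt_1 :
    (∀ a b c : ℝ × ℝ, stmt1Op (stmt1Op a b) c = stmt1Op a (stmt1Op b c)) ∧
    (∀ a : ℝ × ℝ, stmt1Op a (0, 0) = a ∧ stmt1Op (0, 0) a = a) ∧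
    (∀ a : ℝ × ℝ, ∃ b : ℝ × ℝ, stmt1Op a b = (0, 0) ∧ stmt1Op b a = (0, 0)) ∧
    (∃ a b : ℝ × ℝ, stmt1Op a b ≠ stmt1Op b a) ∧
    (∀ a b : ℝ × ℝ, stmt1Lt a b ∨ a = b ∨ stmt1Lt b a) ∧
    (∀ a b c : ℝ × ℝ, stmt1Lt a b →
      stmt1Lt (stmt1Op a c) (stmt1Op b c) ∧ stmt1Lt (stmt1Op c a) (stmt1Op c b)) ∧
    (∀ ε : ℝ × ℝ, stmt1Lt (0, 0) ε →
      ∃ β γ : ℝ × ℝ, stmt1Lt (0, 0) β ∧ stmt1Lt (0, 0) γ ∧ stmt1Lt (stmt1Op β γ) ε) := by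
  refine ⟨?_, ?_, ?_, ?_, ?_, ?_, ?_⟩
  · intro a b c
    simp only [stmt1Op, Real.exp_add, Prod.mk.injEq]
    constructor <;> ring
  · intro a
    simp [stmt1Op]
  · intro a
    have he : Real.exp (-a.1) * Real.exp a.1 = 1 := by rw [← Real.exp_add]; simp
    refine ⟨(-a.1, -a.2 * Real.exp (-a.1)), ?_, ?_⟩
    · simp only [stmt1Op, Prod.mk.injEq]
      exact ⟨by ring, by ring⟩
    · simp only [stmt1Op, Prod.mk.injEq]
      exact ⟨by ring, by linear_combination (-a.2) * he⟩
  · refine ⟨(1, 0), (0, 1), ?_⟩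
    simp only [stmt1Op, Real.exp_zero, Real.exp_one_rpow, Prod.mk.injEq, ne_eq]
    intro h
    have := h.2
    have h1 : (1:ℝ) < Real.exp 1 := Real.exp_one_gt_d9.trans_le' (by norm_num)
    norm_num at this
    linarith
  · intro a b
    rcases lt_trichotomy a.1 b.1 with h | h | h
    · exact Or.inl (Or.inl h)
    · rcases lt_trichotomy a.2 b.2 with h2 | h2 | h2
      · exact Or.inl (Or.inr ⟨h, h2⟩)
      · exact Or.inr (Or.inl (Prod.ext h h2))
      · exact Or.inr (Or.inr (Or.inr ⟨h.symm, h2⟩))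
    · exact Or.inr (Or.inr (Or.inl h))
  · intro a b c hab
    rcases hab with h | ⟨h1, h2⟩
    · exact ⟨Or.inl (by simpa [stmt1Op] using h),
        Or.inl (by simpa [stmt1Op] using h)⟩
    · constructor
      · refine Or.inr ⟨by simp [stmt1Op, h1], ?_⟩
        simp only [stmt1Op]
        have := Real.exp_pos c.1
        nlinarith
      · refine Or.inr ⟨by simp [stmt1Op, h1], ?_⟩
        simp only [stmt1Op, h1]
        linarith
  · intro ε hε
    rcases hε with h | ⟨h1, h2⟩
    · replace h : (0:ℝ) < ε.1 := h
      refine ⟨(ε.1 / 4, 0), (ε.1 / 4, 0), Or.inl (by simpa using by linarith),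
        Or.inl (by simpa using by linarith), Or.inl ?_⟩
      simp only [stmt1Op]
      linarith
    · simp only at h1 h2
      refine ⟨(0, ε.2 / 4), (0, ε.2 / 4), Or.inr ⟨rfl, by simpa using by linarith⟩,
        Or.inr ⟨rfl, by simpa using by linarith⟩, Or.inr ⟨by simp [stmt1Op, ← h1], ?_⟩⟩
      simp only [stmt1Op, Real.exp_zero]
      linarith
end

section
/- Let (D,≤) be a DeMarr division ring. Then the additive monoid (D,+,0,≤) is dense: for every x ∈ D with 0 < x there exist y, z ∈ D with 0 < y, 0 < z and y + z < x. -/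
/-- The additive monoid of a DeMarr division ring is dense. -/
theorem stmt_4 (D : Type*) [DivisionRing D] [PartialOrder D]
    (hadd : ∀ a b c : D, a ≤ b → a + c ≤ b + c)
    (hmul : ∀ x y : D, 0 ≤ x → 0 ≤ y → 0 ≤ x * y)
    (h01 : (0 : D) < 1)
    (hinv : ∀ x : D, 0 < x → 0 < x⁻¹) :
    ∀ x : D, 0 < x → ∃ y z : D, 0 < y ∧ 0 < z ∧ y + z < x := by
  intro x hx
  have h12 : (1 : D) ≤ 2 := by
    have := hadd 0 1 1 h01.le
    simpa [one_add_one_eq_two] using this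
  have h02 : (0 : D) < 2 := lt_of_lt_of_le h01 h12
  have h2ne : (2 : D) ≠ 0 := ne_of_gt h02
  have hhalf : (0 : D) < 2⁻¹ := hinv 2 h02
  have hhalfne : (2 : D)⁻¹ ≠ 0 := ne_of_gt hhalf
  have hsum : (2 : D)⁻¹ + 2⁻¹ = 1 := by
    have : ((2 : D)) * 2⁻¹ = 1 := mul_inv_cancel₀ h2ne
    calc (2 : D)⁻¹ + 2⁻¹ = (1 + 1) * 2⁻¹ := by rw [add_mul, one_mul]
      _ = 2 * 2⁻¹ := by norm_num
      _ = 1 := this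
  -- x/2 is positive
  have hxhalf_nonneg : (0 : D) ≤ x * 2⁻¹ := hmul x 2⁻¹ hx.le hhalf.le
  have hxhalf_ne : x * 2⁻¹ ≠ 0 := mul_ne_zero (ne_of_gt hx) hhalfne
  have hxhalf : (0 : D) < x * 2⁻¹ := lt_of_le_of_ne hxhalf_nonneg (Ne.symm hxhalf_ne)
  -- x/4 is positive
  have hq_nonneg : (0 : D) ≤ x * 2⁻¹ * 2⁻¹ := hmul _ _ hxhalf_nonneg hhalf.le
  have hq_ne : x * 2⁻¹ * 2⁻¹ ≠ 0 := mul_ne_zero hxhalf_ne hhalfne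
  have hq : (0 : D) < x * 2⁻¹ * 2⁻¹ := lt_of_le_of_ne hq_nonneg (Ne.symm hq_ne)
  refine ⟨x * 2⁻¹ * 2⁻¹, x * 2⁻¹ * 2⁻¹, hq, hq, ?_⟩
  have hqq : x * 2⁻¹ * 2⁻¹ + x * 2⁻¹ * 2⁻¹ = x * 2⁻¹ := by
    rw [← mul_add, hsum, mul_one]
  have hxx : x * 2⁻¹ + x * 2⁻¹ = x := by
    rw [← mul_add, hsum, mul_one]
  rw [hqq]
  have hle : x * 2⁻¹ ≤ x := by
    have := hadd 0 (x * 2⁻¹) (x * 2⁻¹) hxhalf.le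
    rwa [zero_add, hxx] at this
  refine lt_of_le_of_ne hle ?_
  intro heq
  rw [heq] at hxx
  have hx0 : x = 0 := by
    have : x + x = x + 0 := by rw [add_zero]; exact hxx
    exact add_left_cancel this
  exact (ne_of_gt hx) hx0
end

section
/- Let ≤ be a total order on a ring R with 1 ≠ 0 making (R,<) a totally ordered ring, and suppose R is dense, i.e. its positive cone has no least element. Let M be a torsion-free unital R-module ordered by a nonempty subset N ⊆ M satisfying: m₁, m₂ ∈ N implies m₁+m₂ ∈ N; N ∩ (−N) = {0}; and r ∈ R ∖ (−P) and m ∈ N imply rm ∈ N, where P is the positive cone of R. Order M by m₂ ≤ m₁ iff m₁ − m₂ ∈ N. Then the monoid of non-negative elements of M is dense: for every m ∈ M with 0 < m there exist m₁, m₂ ∈ M with 0 < m₁, 0 < m₂ and m₁ + m₂ < m. -/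
/-- If `R` is a dense totally ordered ring with `1 ≠ 0` and `M` is a
torsion-free unital `R`-module ordered by a cone `N`, then the monoid of non-negative
elements of `M` is dense: every `m` with `0 < m` (i.e. `m ∈ N` and `m ≠ 0`) dominates a
sum `m₁ + m₂` of two elements with `0 < m₁`, `0 < m₂` and `m₁ + m₂ < m`. -/
theorem stmt_5 (R : Type*) [Ring R] [LinearOrder R] (h1 : (1 : R) ≠ 0)
    (hadd : ∀ a b c : R, a < b → a + c < b + c)
    (hmul : ∀ a b c : R, a < b → 0 < c → a * c < b * c ∧ c * a < c * b)
    (hdense : ¬ ∃ x : R, 0 < x ∧ ∀ y : R, 0 < y → x ≤ y)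
    (M : Type*) [AddCommGroup M] [Module R M]
    (htf : ∀ (r : R) (m : M), r • m = 0 → r = 0 ∨ m = 0)
    (N : Set M) (hNne : N.Nonempty)
    (hNadd : ∀ m₁ m₂ : M, m₁ ∈ N → m₂ ∈ N → m₁ + m₂ ∈ N)
    (hNcap : N ∩ {x : M | -x ∈ N} = {0})
    (hNsmul : ∀ r : R, r ∉ {x : R | 0 < -x} → ∀ m ∈ N, r • m ∈ N) :
    ∀ m : M, m ∈ N → m ≠ 0 →
      ∃ m₁ m₂ : M, (m₁ ∈ N ∧ m₁ ≠ 0) ∧ (m₂ ∈ N ∧ m₂ ≠ 0) ∧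
        (m - (m₁ + m₂) ∈ N ∧ m₁ + m₂ ≠ m) := by
  intro m hm hm0
  -- First: 0 < 1 in R.
  have h01 : (0 : R) < 1 := by
    rcases lt_trichotomy (0 : R) 1 with h | h | h
    · exact h
    · exact absurd h.symm h1
    · -- 1 < 0, so 0 < -1, then 1 * (-1) < 0 * (-1) gives -1 < 0, contradiction
      have hneg : (0 : R) < -1 := by
        have := hadd 1 0 (-1) h
        simpa using this
      have := (hmul 1 0 (-1) h hneg).1
      simp only [one_mul, zero_mul] at this
      exact absurd hneg (lt_asymm this)
  -- density: below any positive element there is a positive element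
  have below : ∀ x : R, 0 < x → ∃ y : R, 0 < y ∧ y < x := by
    intro x hx
    by_contra hcon
    push_neg at hcon
    exact hdense ⟨x, hx, fun y hy => hcon y hy⟩
  obtain ⟨s, hs0, hs1⟩ := below 1 h01
  obtain ⟨t, ht0, hts⟩ := below s hs0
  -- helper: positive scalars keep N
  have hpos_smul : ∀ r : R, 0 < r → r • m ∈ N := by
    intro r hr
    refine hNsmul r ?_ m hm
    intro hmem
    have : -r < 0 := by
      have := hadd 0 r (-r) hr
      simpa using this
    exact absurd hmem (by simpa using lt_asymm this)
  have hst : 0 < s - t := by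
    have := hadd t s (-t) hts
    simpa [sub_eq_add_neg] using this
  have h1s : 0 < 1 - s := by
    have := hadd s 1 (-s) hs1
    simpa [sub_eq_add_neg] using this
  refine ⟨t • m, (s - t) • m, ⟨hpos_smul t ht0, ?_⟩, ⟨hpos_smul (s - t) hst, ?_⟩, ?_, ?_⟩
  · intro h
    rcases htf t m h with h' | h'
    · exact absurd h'.symm (ne_of_lt ht0)
    · exact hm0 h'
  · intro h
    rcases htf (s - t) m h with h' | h'
    · exact absurd h'.symm (ne_of_lt hst)
    · exact hm0 h'
  · have : m - (t • m + (s - t) • m) = (1 - s) • m := by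
      have hsc : t + (s - t) = s := by abel
      rw [← add_smul, hsc, sub_smul, one_smul]
    rw [this]
    exact hpos_smul (1 - s) h1s
  · intro h
    have h' : m - (t • m + (s - t) • m) = 0 := by rw [h]; abel
    have heq : (1 - s) • m = 0 := by
      have hsc : t + (s - t) = s := by abel
      rw [← h', ← add_smul, hsc, sub_smul, one_smul]
    rcases htf (1 - s) m heq with h'' | h''
    · exact absurd h''.symm (ne_of_lt h1s)
    · exact hm0 h''
end

section
/- Let ≤ be a total order on a commutative hemiring H such that a < b implies a+c < b+c for all c, and a < b together with 0 < c implies ac < bc. Let F be a field equipped with an H-pseudonorm |·| : F → H. Then every finite-dimensional F-algebra R admits an H-pseudonorm, i.e. there exists ‖·‖ : R → H such that ‖a‖ ≥ 0 with ‖a‖ = 0 iff a = 0, ‖a−b‖ ≤ ‖a‖+‖b‖, and ‖ab‖ ≤ ‖a‖·‖b‖ for all a,b ∈ R. -/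
/-!
Fix an `F`-basis `(b i)` of `R` and put `S a = ∑ i, ν (aᵢ)` on the coordinates of `a`. Then `S`
is nonnegative, definite and satisfies the triangle inequality, and expanding `a * c` in the
basis gives `S (a * c) ≤ K * (S a * S c)`, where `K` is the total size of the structure constants
`b i * b j = ∑ k, γᵢⱼₖ • b k`. So `C * S` is an `H`-pseudonorm for any `C ≥ K` with `C > 0`, e.g.
`C = ν 1 + K`.
-/

open Finset

structure IsPseudonorm {R H : Type*} [Ring R] [Zero H] [Add H] [Mul H] [LE H] (f : R → H) :
    Prop where
  nonneg : ∀ a, 0 ≤ f a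
  eq_zero_iff : ∀ a, f a = 0 ↔ a = 0
  sub_le : ∀ a b, f (a - b) ≤ f a + f b
  mul_le : ∀ a b, f (a * b) ≤ f a * f b

lemma isOrderedAddMonoid_of_add_lt_add_right {H : Type*} [AddCommMonoid H] [PartialOrder H]
    (hadd : ∀ a b c : H, a < b → a + c < b + c) : IsOrderedAddMonoid H where
  add_le_add_left a b hab c := by
    rcases hab.lt_or_eq with hlt | rfl
    · exact (hadd a b c hlt).le
    · exact le_rfl

namespace IsPseudonorm

section Additive

variable {R H : Type*} [Ring R] [AddCommMonoid H] [Mul H] [PartialOrder H] {ν : R → H}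

lemma map_zero (hν : IsPseudonorm ν) : ν 0 = 0 := (hν.eq_zero_iff 0).2 rfl

lemma pos_of_ne_zero (hν : IsPseudonorm ν) {a : R} (ha : a ≠ 0) : 0 < ν a :=
  (hν.nonneg a).lt_of_ne' (mt (hν.eq_zero_iff a).1 ha)

lemma neg_le (hν : IsPseudonorm ν) (a : R) : ν (-a) ≤ ν a := by
  simpa [hν.map_zero] using hν.sub_le 0 a

variable [IsOrderedAddMonoid H]

lemma add_le (hν : IsPseudonorm ν) (a b : R) : ν (a + b) ≤ ν a + ν b := by
  simpa using (hν.sub_le a (-b)).trans (add_le_add_right (hν.neg_le b) _)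

lemma sum_le (hν : IsPseudonorm ν) {ι : Type*} (s : Finset ι) (f : ι → R) :
    ν (∑ i ∈ s, f i) ≤ ∑ i ∈ s, ν (f i) :=
  Finset.le_sum_of_subadditive ν hν.map_zero.le hν.add_le s f

end Additive

lemma mul_mul_le {R H : Type*} [Ring R] [NonUnitalSemiring H] [Preorder H] [MulPosMono H]
    {ν : R → H} (hν : IsPseudonorm ν) (a b c : R) : ν (a * b * c) ≤ ν a * ν b * ν c :=
  (hν.mul_le _ _).trans (mul_le_mul_of_nonneg_right (hν.mul_le a b) (hν.nonneg c))

end IsPseudonorm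

lemma isPseudonorm_const_mul {R H : Type*} [Ring R] [NonUnitalCommSemiring H] [PartialOrder H]
    [IsOrderedAddMonoid H] [PosMulStrictMono H] [MulPosMono H] {f : R → H} {K C : H}
    (hC : 0 < C) (hKC : K ≤ C)
    (nonneg : ∀ a, 0 ≤ f a) (eq_zero_iff : ∀ a, f a = 0 ↔ a = 0)
    (sub_le : ∀ a b, f (a - b) ≤ f a + f b) (mul_le : ∀ a b, f (a * b) ≤ K * (f a * f b)) :
    IsPseudonorm (fun a => C * f a) where
  nonneg a := mul_nonneg hC.le (nonneg a)
  eq_zero_iff a := by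
    refine ⟨fun h => ?_, fun h => by simp [(eq_zero_iff a).2 h]⟩
    by_contra ha
    exact (mul_pos hC ((nonneg a).lt_of_ne' (mt (eq_zero_iff a).1 ha))).ne' h
  sub_le a b := (mul_le_mul_of_nonneg_left (sub_le a b) hC.le).trans_eq (mul_add _ _ _)
  mul_le a b := calc
    C * f (a * b) ≤ C * (C * (f a * f b)) :=
      mul_le_mul_of_nonneg_left ((mul_le a b).trans
        (mul_le_mul_of_nonneg_right hKC (mul_nonneg (nonneg a) (nonneg b)))) hC.le
    _ = C * f a * (C * f b) := by rw [mul_mul_mul_comm, ← mul_assoc]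

lemma Module.Basis.repr_mul_apply {F R ι : Type*} [CommSemiring F] [Semiring R] [Algebra F R]
    [Fintype ι] (b : Module.Basis ι F R) (a c : R) (k : ι) :
    b.repr (a * c) k = ∑ i, ∑ j, b.repr a i * b.repr c j * b.repr (b i * b j) k := by
  conv_lhs => rw [← b.sum_repr a, ← b.sum_repr c]
  simp only [sum_mul_sum, smul_mul_smul_comm, map_sum, map_smul, Finsupp.coe_finsetSum,
    Finset.sum_apply, Finsupp.smul_apply, smul_eq_mul]

section BasisNorm

variable {F R H ι : Type*} [CommRing F] [Ring R] [Algebra F R] [Fintype ι]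
  [NonUnitalCommSemiring H] [PartialOrder H] [IsOrderedAddMonoid H]

noncomputable def basisL1Norm (ν : F → H) (b : Module.Basis ι F R) (a : R) : H :=
  ∑ i, ν (b.repr a i)

noncomputable def structureConstNorm (ν : F → H) (b : Module.Basis ι F R) : H :=
  ∑ i, ∑ j, ∑ k, ν (b.repr (b i * b j) k)

variable {ν : F → H} (hν : IsPseudonorm ν) (b : Module.Basis ι F R)
include hν

lemma basisL1Norm_nonneg (a : R) : 0 ≤ basisL1Norm ν b a :=
  sum_nonneg fun _ _ => hν.nonneg _

lemma structureConstNorm_nonneg : 0 ≤ structureConstNorm ν b :=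
  sum_nonneg fun _ _ => sum_nonneg fun _ _ => sum_nonneg fun _ _ => hν.nonneg _

lemma basisL1Norm_eq_zero_iff (a : R) : basisL1Norm ν b a = 0 ↔ a = 0 := by
  simp only [basisL1Norm, sum_eq_zero_iff_of_nonneg fun i _ => hν.nonneg _, mem_univ,
    hν.eq_zero_iff, true_imp_iff]
  rw [← b.repr.map_eq_zero_iff, Finsupp.ext_iff]
  rfl

lemma basisL1Norm_sub_le (a c : R) :
    basisL1Norm ν b (a - c) ≤ basisL1Norm ν b a + basisL1Norm ν b c := by
  simp only [basisL1Norm, map_sub, Finsupp.sub_apply, ← sum_add_distrib]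
  exact sum_le_sum fun i _ => hν.sub_le _ _

lemma basisL1Norm_mul_le [PosMulMono H] [MulPosMono H] (a c : R) :
    basisL1Norm ν b (a * c) ≤
      structureConstNorm ν b * (basisL1Norm ν b a * basisL1Norm ν b c) := by
  calc basisL1Norm ν b (a * c)
      ≤ ∑ k, ∑ i, ∑ j, ν (b.repr a i) * ν (b.repr c j) * ν (b.repr (b i * b j) k) := by
        refine sum_le_sum fun k _ => ?_
        rw [b.repr_mul_apply]
        exact (hν.sum_le _ _).trans <| sum_le_sum fun i _ =>
          (hν.sum_le _ _).trans <| sum_le_sum fun j _ => hν.mul_mul_le _ _ _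
    _ = ∑ i, ∑ j, ν (b.repr a i) * ν (b.repr c j) * ∑ k, ν (b.repr (b i * b j) k) := by
        simp only [mul_sum]
        rw [sum_comm]
        exact sum_congr rfl fun i _ => sum_comm
    _ ≤ ∑ i, ∑ j, ν (b.repr a i) * ν (b.repr c j) * structureConstNorm ν b := by
        gcongr with i _ j _
        · exact mul_nonneg (hν.nonneg _) (hν.nonneg _)
        · have hnonneg : ∀ i j k, 0 ≤ ν (b.repr (b i * b j) k) := fun _ _ _ => hν.nonneg _
          exact (single_le_sum (fun j _ => sum_nonneg fun k _ => hnonneg i j k) (mem_univ j)).trans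
            (single_le_sum (fun i _ => sum_nonneg fun j _ => sum_nonneg fun k _ => hnonneg i j k)
              (mem_univ i))
    _ = structureConstNorm ν b * (basisL1Norm ν b a * basisL1Norm ν b c) := by
        rw [basisL1Norm, basisL1Norm, sum_mul_sum, mul_comm, sum_mul]
        simp only [sum_mul]

end BasisNorm

/-- If `H` is a totally ordered commutative hemiring, `F` is a field
with an `H`-pseudonorm, and `R` is a finite-dimensional `F`-algebra, then `R` admits an
`H`-pseudonorm. -/
theorem stmt_12 (H : Type*) [NonUnitalCommSemiring H] [LinearOrder H]
    (hadd : ∀ a b c : H, a < b → a + c < b + c)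
    (hmul : ∀ a b c : H, a < b → 0 < c → a * c < b * c)
    (F : Type*) [Field F] (ν : F → H)
    (hν0 : ∀ r : F, 0 ≤ ν r) (hνeq : ∀ r : F, ν r = 0 ↔ r = 0)
    (hνsub : ∀ r s : F, ν (r - s) ≤ ν r + ν s)
    (hνmul : ∀ r s : F, ν (r * s) ≤ ν r * ν s)
    (R : Type*) [Ring R] [Algebra F R] [FiniteDimensional F R] :
    ∃ nrm : R → H, (∀ a : R, 0 ≤ nrm a) ∧ (∀ a : R, nrm a = 0 ↔ a = 0) ∧
      (∀ a b : R, nrm (a - b) ≤ nrm a + nrm b) ∧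
      (∀ a b : R, nrm (a * b) ≤ nrm a * nrm b) := by
  have := isOrderedAddMonoid_of_add_lt_add_right hadd
  have : MulPosStrictMono H := (mulPosStrictMono_iff H).2 fun _ hc _ _ hab => hmul _ _ _ hab hc
  have : PosMulStrictMono H := posMulStrictMono_iff_mulPosStrictMono.2 this
  have hν : IsPseudonorm ν := ⟨hν0, hνeq, hνsub, hνmul⟩
  let b := Module.finBasis F R
  have hK := structureConstNorm_nonneg hν b
  have hnrm : IsPseudonorm fun a => (ν 1 + structureConstNorm ν b) * basisL1Norm ν b a :=
    isPseudonorm_const_mul ((hν.pos_of_ne_zero one_ne_zero).trans_le (le_add_of_nonneg_right hK))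
      (le_add_of_nonneg_left (hν.nonneg 1)) (basisL1Norm_nonneg hν b)
      (basisL1Norm_eq_zero_iff hν b) (basisL1Norm_sub_le hν b) (basisL1Norm_mul_le hν b)
  exact ⟨_, hnrm.nonneg, hnrm.eq_zero_iff, hnrm.sub_le, hnrm.mul_le⟩
end

section
/- Let (S,≤) be an ordered ring that is dense and shrinkable, and such that (S,≤) is a join-semilattice (every pair of elements has a least upper bound). Let R be an S-pseudonormed ring. If (x_n) and (y_n) are sequences in R converging to a and b in R respectively, then the sequence (x_n y_n) converges to ab. -/
/-- Over an ordered ring `S` that is dense, shrinkable and a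
join-semilattice, in an `S`-pseudonormed ring the product of two convergent sequences
converges to the product of the limits. -/
theorem stmt_14 (S : Type*) [Ring S] [SemilatticeSup S]
    (hadd : ∀ a b c : S, a ≤ b → a + c ≤ b + c)
    (hmul : ∀ a b c : S, a ≤ b → 0 ≤ c → a * c ≤ b * c ∧ c * a ≤ c * b)
    (hdense : ∀ ε : S, 0 < ε → ∃ β γ : S, 0 < β ∧ 0 < γ ∧ β + γ < ε)
    (hshrink : ∀ α M : S, 0 < α → 0 < M →
      ∃ αl αr : S, 0 < αl ∧ 0 < αr ∧ M * αr < α ∧ αl * M < α)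
    (R : Type*) [Ring R] (ν : R → S)
    (hν0 : ∀ r : R, 0 ≤ ν r) (hνeq : ∀ r : R, ν r = 0 ↔ r = 0)
    (hνsub : ∀ r s : R, ν (r - s) ≤ ν r + ν s)
    (hνmul : ∀ r s : R, ν (r * s) ≤ ν r * ν s)
    (x y : ℕ → R) (a b : R)
    (hx : ∀ ε : S, 0 < ε → ∃ N : ℕ, ∀ n ≥ N, ν (x n - a) < ε)
    (hy : ∀ ε : S, 0 < ε → ∃ N : ℕ, ∀ n ≥ N, ν (y n - b) < ε) :
    ∀ ε : S, 0 < ε → ∃ N : ℕ, ∀ n ≥ N, ν (x n * y n - a * b) < ε := by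
  intro ε hε
  have hν0' : ν (0 : R) = 0 := (hνeq 0).mpr rfl
  have hνneg : ∀ r : R, ν (-r) ≤ ν r := by
    intro r
    have h := hνsub 0 r
    simpa [hν0'] using h
  have htri : ∀ r s : R, ν (r + s) ≤ ν r + ν s := by
    intro r s
    have h1 : ν (r - (-s)) ≤ ν r + ν (-s) := hνsub r (-s)
    have h2 : ν r + ν (-s) ≤ ν r + ν s := by
      have h := hadd (ν (-s)) (ν s) (ν r) (hνneg s)
      simpa [add_comm] using h
    calc ν (r + s) = ν (r - (-s)) := by rw [sub_neg_eq_add]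
      _ ≤ ν r + ν (-s) := h1
      _ ≤ ν r + ν s := h2
  obtain ⟨β, γ, hβ, hγ, hβγ⟩ := hdense ε hε
  obtain ⟨β1, β2, hβ1, hβ2, hβ12⟩ := hdense β hβ
  obtain ⟨_, αr, -, hαr, hαrlt, -⟩ := hshrink β1 β1 hβ1 hβ1
  have hble : ν b ≤ ν b + β1 := by
    have h := hadd 0 β1 (ν b) (le_of_lt hβ1)
    simpa [add_comm] using h
  have hb1 : 0 < ν b + β1 := by
    have h := hadd 0 (ν b) β1 (hν0 b)
    have h' : β1 ≤ ν b + β1 := by simpa using h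
    exact lt_of_lt_of_le hβ1 h'
  obtain ⟨αl, -, hαl, -, -, hαllt⟩ := hshrink β2 (ν b + β1) hβ2 hb1
  have hale : ν a ≤ ν a + β1 := by
    have h := hadd 0 β1 (ν a) (le_of_lt hβ1)
    simpa [add_comm] using h
  have ha1 : 0 < ν a + β1 := by
    have h := hadd 0 (ν a) β1 (hν0 a)
    have h' : β1 ≤ ν a + β1 := by simpa using h
    exact lt_of_lt_of_le hβ1 h'
  obtain ⟨-, αr2, -, hαr2, hαr2lt, -⟩ := hshrink γ (ν a + β1) hγ ha1
  obtain ⟨N1, hN1⟩ := hx β1 hβ1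
  obtain ⟨N2, hN2⟩ := hx αl hαl
  obtain ⟨N3, hN3⟩ := hy αr hαr
  obtain ⟨N4, hN4⟩ := hy αr2 hαr2
  refine ⟨max (max N1 N2) (max N3 N4), fun n hn => ?_⟩
  have hn1 : n ≥ N1 := le_trans (le_trans (le_max_left _ _) (le_max_left _ _)) hn
  have hn2 : n ≥ N2 := le_trans (le_trans (le_max_right _ _) (le_max_left _ _)) hn
  have hn3 : n ≥ N3 := le_trans (le_trans (le_max_left _ _) (le_max_right _ _)) hn
  have hn4 : n ≥ N4 := le_trans (le_trans (le_max_right _ _) (le_max_right _ _)) hn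
  have hx1 := hN1 n hn1
  have hx2 := hN2 n hn2
  have hy1 := hN3 n hn3
  have hy2 := hN4 n hn4
  set P := (x n - a) * (y n - b) with hP
  set Q := (x n - a) * b with hQ
  set T := a * (y n - b) with hT
  have hdecomp : x n * y n - a * b = P + Q + T := by
    rw [hP, hQ, hT]; noncomm_ring
  have htri3 : ν (x n * y n - a * b) ≤ ν P + ν Q + ν T := by
    rw [hdecomp]
    calc ν (P + Q + T) ≤ ν (P + Q) + ν T := htri _ _
      _ ≤ (ν P + ν Q) + ν T := hadd _ _ _ (htri P Q)
  -- bound ν P < β1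
  have hTP : ν P < β1 := by
    have s1 : ν P ≤ ν (x n - a) * ν (y n - b) := hνmul _ _
    have s2 : ν (x n - a) * ν (y n - b) ≤ ν (x n - a) * αr :=
      (hmul (ν (y n - b)) αr (ν (x n - a)) (le_of_lt hy1) (hν0 _)).2
    have s3 : ν (x n - a) * αr ≤ β1 * αr :=
      (hmul (ν (x n - a)) β1 αr (le_of_lt hx1) (le_of_lt hαr)).1
    exact lt_of_le_of_lt (le_trans (le_trans s1 s2) s3) hαrlt
  -- bound ν Q < β2
  have hTQ : ν Q < β2 := by
    have s1 : ν Q ≤ ν (x n - a) * ν b := hνmul _ _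
    have s2 : ν (x n - a) * ν b ≤ αl * ν b :=
      (hmul (ν (x n - a)) αl (ν b) (le_of_lt hx2) (hν0 b)).1
    have s3 : αl * ν b ≤ αl * (ν b + β1) :=
      (hmul (ν b) (ν b + β1) αl hble (le_of_lt hαl)).2
    exact lt_of_le_of_lt (le_trans (le_trans s1 s2) s3) hαllt
  -- bound ν T < γ
  have hTT : ν T < γ := by
    have s1 : ν T ≤ ν a * ν (y n - b) := hνmul _ _
    have s2 : ν a * ν (y n - b) ≤ ν a * αr2 :=
      (hmul (ν (y n - b)) αr2 (ν a) (le_of_lt hy2) (hν0 a)).2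
    have s3 : ν a * αr2 ≤ (ν a + β1) * αr2 :=
      (hmul (ν a) (ν a + β1) αr2 hale (le_of_lt hαr2)).1
    exact lt_of_le_of_lt (le_trans (le_trans s1 s2) s3) hαr2lt
  have hsum : ν P + ν Q + ν T ≤ β1 + β2 + γ := by
    have s1 : ν P + ν Q ≤ β1 + ν Q := hadd _ _ _ (le_of_lt hTP)
    have s2 : β1 + ν Q ≤ β1 + β2 := by
      have h := hadd (ν Q) β2 β1 (le_of_lt hTQ)
      simpa [add_comm] using h
    have s3 : ν P + ν Q + ν T ≤ (β1 + β2) + ν T := hadd _ _ _ (le_trans s1 s2)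
    have s4 : (β1 + β2) + ν T ≤ (β1 + β2) + γ := by
      have h := hadd (ν T) γ (β1 + β2) (le_of_lt hTT)
      simpa [add_comm] using h
    exact le_trans s3 s4
  have hfin : β1 + β2 + γ < ε :=
    lt_of_le_of_lt (hadd (β1 + β2) β γ (le_of_lt hβ12)) hβγ
  exact lt_of_le_of_lt (le_trans htri3 hsum) hfin
end

section
/- Let ≤ be a total order on a commutative ring R with 1 making (R,<) a totally ordered ring, and assume R is dense and shrinkable. Let r ∈ R with r ≠ 1. Then: (1) if the sequence (r^n) converges in R, it converges to zero; (2) the geometric series Σ_{n=0}^{∞} r^n is convergent in R if and only if the sequence (r^n) converges to zero and 1−r is invertible in R, in which case the sum equals (1−r)^{-1}. -/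
/-- The absolute value `|a| = max a (-a)` in a linearly ordered ring. -/
def rAbs {R : Type*} [Ring R] [LinearOrder R] (a : R) : R := max a (-a)

/-- Convergence of a sequence in a linearly ordered ring w.r.t. `rAbs`. -/
def rConv {R : Type*} [Ring R] [LinearOrder R] (u : ℕ → R) (l : R) : Prop :=
  ∀ ε : R, 0 < ε → ∃ N : ℕ, ∀ n ≥ N, rAbs (u n - l) < ε

/-!
Once the hypotheses are recognised as making `R` a strictly ordered ring, this is the usual
argument for the geometric series, with two ingredients replacing completeness and the Archimedean
property: density (which follows from shrinkability with `M = 2`) splits an `ε` into two positive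
parts, giving uniqueness of limits and limits of differences, and shrinkability makes
multiplication by a constant continuous. Then `r * r ^ n = r ^ (n + 1)` forces `r * l = l` for a
limit `l` of the powers, hence `l = 0` as `r ≠ 1`; the terms of a convergent series tend to zero;
and `(1 - r) * ∑_{i < n} r ^ i = 1 - r ^ n` turns convergence of the series into
`(1 - r) * l = 1`, and conversely a left inverse `u` of `1 - r` into the limit of the series.
-/

open Finset

lemma IsOrderedAddMonoid.of_add_lt_add_right {R : Type*} [AddCommMonoid R] [PartialOrder R]
    (hadd : ∀ a b c : R, a < b → a + c < b + c) : IsOrderedAddMonoid R where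
  add_le_add_left a b hab c := by
    rcases hab.eq_or_lt with rfl | hlt
    · exact le_rfl
    · exact (hadd a b c hlt).le

lemma IsStrictOrderedRing.of_mul_lt_mul_right {R : Type*} [Ring R] [LinearOrder R]
    [IsOrderedAddMonoid R] [Nontrivial R] (hmul : ∀ a b c : R, a < b → 0 < c → a * c < b * c) :
    IsStrictOrderedRing R :=
  have hpos : ∀ a b : R, 0 < a → 0 < b → 0 < a * b := fun a b ha hb => by
    simpa using hmul 0 a b ha hb
  have : ZeroLEOneClass R := ⟨le_of_not_gt fun h => by
    have := hpos (-1) (-1) (neg_pos.2 h) (neg_pos.2 h)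
    rw [neg_mul_neg, one_mul] at this
    exact this.asymm h⟩
  .of_mul_pos hpos

def IsDenseRing (R : Type*) [Ring R] [LinearOrder R] : Prop :=
  ∀ ε : R, 0 < ε → ∃ β γ : R, 0 < β ∧ 0 < γ ∧ β + γ < ε

def IsShrinkableRing (R : Type*) [Ring R] [LinearOrder R] : Prop :=
  ∀ α M : R, 0 < α → 0 < M → ∃ αl αr : R, 0 < αl ∧ 0 < αr ∧ M * αr < α ∧ αl * M < α

lemma IsShrinkableRing.isDenseRing {R : Type*} [Ring R] [LinearOrder R] [IsStrictOrderedRing R]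
    (hshrink : IsShrinkableRing R) : IsDenseRing R := fun ε hε => by
  obtain ⟨-, α, -, hα, h2α, -⟩ := hshrink ε 2 hε two_pos
  exact ⟨α, α, hα, hα, by rwa [← two_mul]⟩

section Additive

variable {R : Type*} [Ring R] [LinearOrder R] {u v : ℕ → R} {a b : R}

lemma rConv_const (c : R) : rConv (fun _ => c) c := fun ε hε =>
  ⟨0, fun n _ => by simpa [rAbs] using hε⟩

lemma rConv.comp_add_one (h : rConv u a) : rConv (fun n => u (n + 1)) a := fun ε hε => by
  obtain ⟨N, hN⟩ := h ε hε
  exact ⟨N, fun n hn => hN (n + 1) (by omega)⟩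

variable [IsOrderedAddMonoid R]

lemma rConv.unique (hdense : IsDenseRing R) (ha : rConv u a) (hb : rConv u b) : a = b := by
  by_contra hne
  obtain ⟨β, γ, hβ, hγ, hβγ⟩ := hdense |a - b| (abs_pos.2 (sub_ne_zero.2 hne))
  obtain ⟨N₁, hN₁⟩ := ha β hβ
  obtain ⟨N₂, hN₂⟩ := hb γ hγ
  set n := max N₁ N₂
  have h₁ : |u n - a| < β := hN₁ n (le_max_left _ _)
  have h₂ : |u n - b| < γ := hN₂ n (le_max_right _ _)
  have : |a - b| < |a - b| := calc
    |a - b| ≤ |a - u n| + |u n - b| := abs_sub_le _ _ _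
    _ < β + γ := by rw [abs_sub_comm]; exact add_lt_add h₁ h₂
    _ < |a - b| := hβγ
  exact this.false

lemma rConv.sub (hdense : IsDenseRing R) (ha : rConv u a) (hb : rConv v b) :
    rConv (fun n => u n - v n) (a - b) := fun ε hε => by
  obtain ⟨β, γ, hβ, hγ, hβγ⟩ := hdense ε hε
  obtain ⟨N₁, hN₁⟩ := ha β hβ
  obtain ⟨N₂, hN₂⟩ := hb γ hγ
  refine ⟨max N₁ N₂, fun n hn => ?_⟩
  have h₁ : |u n - a| < β := hN₁ n (le_of_max_le_left hn)
  have h₂ : |v n - b| < γ := hN₂ n (le_of_max_le_right hn)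
  calc |u n - v n - (a - b)| = |(u n - a) - (v n - b)| := by rw [sub_sub_sub_comm]
    _ ≤ |u n - a| + |v n - b| := abs_sub _ _
    _ < β + γ := add_lt_add h₁ h₂
    _ < ε := hβγ

lemma rConv_zero_of_rConv_partialSum (hdense : IsDenseRing R)
    (h : rConv (fun n => ∑ i ∈ range n, u i) a) : rConv u 0 := by
  simpa [sum_range_succ] using h.comp_add_one.sub hdense h

end Additive

section Multiplicative

variable {R : Type*} [Ring R] [LinearOrder R] [IsStrictOrderedRing R] {u : ℕ → R} {l : R}

lemma rConv.const_mul (hshrink : IsShrinkableRing R) (c : R) (h : rConv u l) :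
    rConv (fun n => c * u n) (c * l) := fun ε hε => by
  rcases eq_or_ne c 0 with rfl | hc
  · simpa using rConv_const (0 : R) ε hε
  obtain ⟨-, α, -, hα, hcα, -⟩ := hshrink ε |c| hε (abs_pos.2 hc)
  obtain ⟨N, hN⟩ := h α hα
  refine ⟨N, fun n hn => ?_⟩
  calc |c * u n - c * l| = |c| * |u n - l| := by rw [← mul_sub, abs_mul]
    _ < |c| * α := mul_lt_mul_of_pos_left (hN n hn) (abs_pos.2 hc)
    _ < ε := hcα

variable {r : R}

lemma rConv_pow_eq_zero (hdense : IsDenseRing R) (hshrink : IsShrinkableRing R) (hr : r ≠ 1)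
    (h : rConv (r ^ ·) l) : l = 0 := by
  have hrl : r * l = l :=
    (h.const_mul hshrink r).unique hdense (by simpa only [pow_succ'] using h.comp_add_one)
  have : (1 - r) * l = 0 := by rw [sub_mul, one_mul, hrl, sub_self]
  exact (mul_eq_zero.1 this).resolve_left (sub_ne_zero.2 hr.symm)

lemma mul_eq_one_of_rConv_geomSum (hdense : IsDenseRing R) (hshrink : IsShrinkableRing R)
    (h : rConv (fun n => ∑ i ∈ range n, r ^ i) l) : (1 - r) * l = 1 := by
  have hlim : rConv (fun n => (1 - r) * ∑ i ∈ range n, r ^ i) (1 - 0) := by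
    simp_rw [mul_neg_geom_sum]
    exact (rConv_const 1).sub hdense (rConv_zero_of_rConv_partialSum hdense h)
  exact (h.const_mul hshrink (1 - r)).unique hdense (by simpa only [sub_zero] using hlim)

lemma rConv_geomSum_of_mul_eq_one (hdense : IsDenseRing R) (hshrink : IsShrinkableRing R)
    (hpow : rConv (r ^ ·) 0) {u : R} (hu : u * (1 - r) = 1) :
    rConv (fun n => ∑ i ∈ range n, r ^ i) u := by
  have hsum (n : ℕ) : ∑ i ∈ range n, r ^ i = u * (1 - r ^ n) := by
    rw [← mul_neg_geom_sum, ← mul_assoc, hu, one_mul]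
  simpa only [hsum, sub_zero, mul_one] using ((rConv_const 1).sub hdense hpow).const_mul hshrink u

end Multiplicative

theorem stmt_18_general (R : Type*) [CommRing R] [LinearOrder R]
    (hadd : ∀ a b c : R, a < b → a + c < b + c)
    (hmul : ∀ a b c : R, a < b → 0 < c → a * c < b * c)
    (hshrink : ∀ α M : R, 0 < α → 0 < M →
      ∃ αl αr : R, 0 < αl ∧ 0 < αr ∧ M * αr < α ∧ αl * M < α)
    (r : R) (hr : r ≠ 1) :
    (∀ l : R, rConv (fun n => r ^ n) l → l = 0) ∧
    ((∃ l : R, rConv (fun n => ∑ i ∈ Finset.range n, r ^ i) l) ↔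
      (rConv (fun n => r ^ n) 0 ∧ IsUnit (1 - r))) ∧
    (∀ l : R, rConv (fun n => ∑ i ∈ Finset.range n, r ^ i) l → (1 - r) * l = 1) := by
  have : Nontrivial R := nontrivial_of_ne r 1 hr
  have : IsOrderedAddMonoid R := .of_add_lt_add_right hadd
  have : IsStrictOrderedRing R := .of_mul_lt_mul_right hmul
  have hdense : IsDenseRing R := IsShrinkableRing.isDenseRing hshrink
  refine ⟨fun l => rConv_pow_eq_zero hdense hshrink hr, ⟨?_, ?_⟩,
    fun l => mul_eq_one_of_rConv_geomSum hdense hshrink⟩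
  · rintro ⟨l, hl⟩
    exact ⟨rConv_zero_of_rConv_partialSum hdense hl,
      .of_mul_eq_one l (mul_eq_one_of_rConv_geomSum hdense hshrink hl)⟩
  · rintro ⟨hpow, hunit⟩
    obtain ⟨u, hu⟩ := hunit.exists_left_inv
    exact ⟨u, rConv_geomSum_of_mul_eq_one hdense hshrink hpow hu⟩

/-- In a dense and shrinkable totally ordered commutative ring with `1`,
for `r ≠ 1`: (1) if `(r^n)` converges then it converges to zero; (2) the geometric
series `Σ r^n` converges iff `(r^n) → 0` and `1 - r` is invertible, and in that case
the sum is the inverse of `1 - r`. -/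
theorem stmt_18 (R : Type*) [CommRing R] [LinearOrder R]
    (hadd : ∀ a b c : R, a < b → a + c < b + c)
    (hmul : ∀ a b c : R, a < b → 0 < c → a * c < b * c)
    (hdense : ∀ ε : R, 0 < ε → ∃ β γ : R, 0 < β ∧ 0 < γ ∧ β + γ < ε)
    (hshrink : ∀ α M : R, 0 < α → 0 < M →
      ∃ αl αr : R, 0 < αl ∧ 0 < αr ∧ M * αr < α ∧ αl * M < α)
    (r : R) (hr : r ≠ 1) :
    (∀ l : R, rConv (fun n => r ^ n) l → l = 0) ∧
    ((∃ l : R, rConv (fun n => ∑ i ∈ Finset.range n, r ^ i) l) ↔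
      (rConv (fun n => r ^ n) 0 ∧ IsUnit (1 - r))) ∧
    (∀ l : R, rConv (fun n => ∑ i ∈ Finset.range n, r ^ i) l → (1 - r) * l = 1) :=
  stmt_18_general R hadd hmul hshrink r hr
end

section
/- Let ≤ be a total order on a commutative ring R with 1 making (R,<) a totally ordered ring, and assume R is dense and shrinkable. Let r ∈ R be such that 1−r is invertible in R and the sequence (r^n) converges to zero in R. Let (G,+) be a Cauchy complete R-normed abelian group and let (x_n)_{n=0}^{∞} be a sequence in G with ‖x_{n+1}‖ ≤ r·‖x_n‖ for all n. Then the series Σ_{n=0}^{∞} x_n is convergent in G. -/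
section Helpers

variable {R : Type*} [CommRing R] [LinearOrder R]

lemma hlp_add_le (hadd : ∀ a b c : R, a < b → a + c < b + c)
    {a b : R} (c : R) (h : a ≤ b) : a + c ≤ b + c := by
  rcases lt_or_eq_of_le h with h | h
  · exact le_of_lt (hadd a b c h)
  · rw [h]

lemma hlp_add_le_add (hadd : ∀ a b c : R, a < b → a + c < b + c)
    {a b c d : R} (h1 : a ≤ b) (h2 : c ≤ d) : a + c ≤ b + d := by
  refine le_trans (hlp_add_le hadd c h1) ?_
  rw [add_comm b c, add_comm b d]
  exact hlp_add_le hadd b h2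

lemma hlp_mul_le (hmul : ∀ a b c : R, a < b → 0 < c → a * c < b * c)
    {a b c : R} (h : a ≤ b) (hc : 0 ≤ c) : a * c ≤ b * c := by
  rcases lt_or_eq_of_le h with h | h
  · rcases lt_or_eq_of_le hc with hc | hc
    · exact le_of_lt (hmul a b c h hc)
    · rw [← hc, mul_zero, mul_zero]
  · rw [h]

lemma hlp_mul_nonneg (hmul : ∀ a b c : R, a < b → 0 < c → a * c < b * c)
    {a b : R} (ha : 0 ≤ a) (hb : 0 ≤ b) : 0 ≤ a * b := by
  have := hlp_mul_le hmul ha hb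
  rwa [zero_mul] at this

lemma hlp_mul_pos (hmul : ∀ a b c : R, a < b → 0 < c → a * c < b * c)
    {a b : R} (ha : 0 < a) (hb : 0 < b) : 0 < a * b := by
  have := hmul 0 a b ha hb
  rwa [zero_mul] at this

lemma hlp_no_pos (hadd : ∀ a b c : R, a < b → a + c < b + c)
    (hmul : ∀ a b c : R, a < b → 0 < c → a * c < b * c)
    (h01 : ¬ (0:R) < 1) (ε : R) (hε : 0 < ε) : False := by
  rcases lt_trichotomy (0:R) 1 with h | h | h
  · exact h01 h
  · have : ε = 0 := by rw [← mul_one ε, ← h, mul_zero]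
    rw [this] at hε
    exact lt_irrefl 0 hε
  · -- 1 < 0, so 0 < -1
    have hneg : (0:R) < -1 := by
      have := hadd 1 0 (-1) h
      simpa using this
    have := hmul 0 (-1) (-1) hneg hneg
    rw [zero_mul, neg_mul_neg, one_mul] at this
    exact h01 this

end Helpers

/-- Let `R` be a dense and shrinkable totally ordered commutative ring
with `1`, `r ∈ R` with `1 - r` invertible and `(r^n) → 0`. If `G` is a Cauchy complete
`R`-normed abelian group and `‖x_{n+1}‖ ≤ r·‖x_n‖` for all `n`, then `Σ x_n`
converges in `G`. -/
theorem stmt_19 (R : Type*) [CommRing R] [LinearOrder R]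
    (hadd : ∀ a b c : R, a < b → a + c < b + c)
    (hmul : ∀ a b c : R, a < b → 0 < c → a * c < b * c)
    (hdense : ∀ ε : R, 0 < ε → ∃ β γ : R, 0 < β ∧ 0 < γ ∧ β + γ < ε)
    (hshrink : ∀ α M : R, 0 < α → 0 < M →
      ∃ αl αr : R, 0 < αl ∧ 0 < αr ∧ M * αr < α ∧ αl * M < α)
    (r : R) (hinv : IsUnit (1 - r)) (hr0 : rConv (fun n => r ^ n) 0)
    (G : Type*) [AddCommGroup G] (ν : G → R)
    (hν0 : ∀ g : G, 0 ≤ ν g) (hνeq : ∀ g : G, ν g = 0 ↔ g = 0)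
    (hνsub : ∀ g h : G, ν (g - h) ≤ ν g + ν h)
    (hcomplete : ∀ u : ℕ → G,
      (∀ ε : R, 0 < ε → ∃ N : ℕ, ∀ m n : ℕ, m ≥ N → n ≥ N → ν (u m - u n) < ε) →
      ∃ l : G, ∀ ε : R, 0 < ε → ∃ N : ℕ, ∀ n ≥ N, ν (u n - l) < ε)
    (x : ℕ → G) (hx : ∀ n : ℕ, ν (x (n + 1)) ≤ r * ν (x n)) :
    ∃ l : G, ∀ ε : R, 0 < ε → ∃ N : ℕ, ∀ n ≥ N,
      ν ((∑ i ∈ Finset.range n, x i) - l) < ε := by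
  have hν00 : ν (0 : G) = 0 := (hνeq 0).mpr rfl
  -- trivial case: no positive elements
  by_cases h01 : (0:R) < 1
  swap
  · exact ⟨0, fun ε hε => absurd (hlp_no_pos hadd hmul h01 ε hε) not_false⟩
  -- trivial case: ν (x 0) = 0
  by_cases hM : ν (x 0) = 0
  · have hzero : ∀ n, ν (x n) = 0 := by
      intro n
      induction n with
      | zero => exact hM
      | succ k ih =>
        have h1 : ν (x (k+1)) ≤ 0 := by
          have := hx k
          rwa [ih, mul_zero] at this
        exact le_antisymm h1 (hν0 _)
    refine ⟨0, fun ε hε => ⟨0, fun n _ => ?_⟩⟩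
    have : (∑ i ∈ Finset.range n, x i) = 0 := by
      apply Finset.sum_eq_zero
      intro i _
      exact (hνeq (x i)).mp (hzero i)
    rw [this, sub_zero, hν00]
    exact hε
  -- main case
  have hMpos : 0 < ν (x 0) := lt_of_le_of_ne (hν0 _) (Ne.symm hM)
  set M := ν (x 0) with hMdef
  -- 0 ≤ r
  have hr_nonneg : 0 ≤ r := by
    by_contra h
    push_neg at h
    have h1 : r * M < 0 := by
      have := hmul r 0 M h hMpos
      rwa [zero_mul] at this
    have h2 : (0:R) ≤ r * M := le_trans (hν0 (x 1)) (hx 0)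
    exact absurd h1 (not_lt_of_ge h2)
  -- powers of r are nonneg
  have hpow_nonneg : ∀ n : ℕ, 0 ≤ r ^ n := by
    intro n
    induction n with
    | zero => rw [pow_zero]; exact le_of_lt h01
    | succ k ih => rw [pow_succ]; exact hlp_mul_nonneg hmul ih hr_nonneg
  -- r < 1
  have hr_lt_one : r < 1 := by
    by_contra h
    push_neg at h
    have hpow_ge : ∀ n : ℕ, (1:R) ≤ r ^ n := by
      intro n
      induction n with
      | zero => rw [pow_zero]
      | succ k ih =>
        rw [pow_succ]
        calc (1:R) = 1 * 1 := by rw [one_mul]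
        _ ≤ r ^ k * 1 := hlp_mul_le hmul ih (le_of_lt h01)
        _ ≤ r ^ k * r := by
            rw [mul_comm (r^k) 1, mul_comm (r^k) r]
            exact hlp_mul_le hmul h (hpow_nonneg k)
    obtain ⟨N, hN⟩ := hr0 1 h01
    have := hN N (le_refl N)
    simp only [sub_zero] at this
    have h2 : (1:R) ≤ rAbs (r ^ N) := le_trans (hpow_ge N) (le_max_left _ _)
    exact absurd this (not_lt_of_ge h2)
  -- 0 < 1 - r
  have h1r : 0 < 1 - r := by
    have := hadd r 1 (-r) hr_lt_one
    simpa [sub_eq_add_neg] using this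
  -- the inverse u of 1 - r
  set u : R := ((hinv.unit⁻¹ : Rˣ) : R) with hudef
  have hu : u * (1 - r) = 1 := by
    have h := hinv.unit.inv_mul
    rw [← IsUnit.unit_spec hinv]
    exact_mod_cast h
  have hu_pos : 0 < u := by
    rcases lt_trichotomy (0:R) u with h | h | h
    · exact h
    · exfalso
      rw [← hu, ← h, zero_mul] at h01
      exact lt_irrefl 0 h01
    · exfalso
      have := hmul u 0 (1 - r) h h1r
      rw [zero_mul, hu] at this
      exact absurd (lt_trans h01 this) (lt_irrefl 0)
  -- ν (x n) ≤ r^n * M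
  have hxn : ∀ n : ℕ, ν (x n) ≤ r ^ n * M := by
    intro n
    induction n with
    | zero => rw [pow_zero, one_mul]
    | succ k ih =>
      calc ν (x (k+1)) ≤ r * ν (x k) := hx k
      _ = ν (x k) * r := mul_comm _ _
      _ ≤ (r ^ k * M) * r := hlp_mul_le hmul ih hr_nonneg
      _ = r ^ (k+1) * M := by ring
  -- triangle inequality for addition
  have hνneg : ∀ g : G, ν (-g) = ν g := by
    intro g
    have h1 : ν (-g) ≤ ν g := by
      have := hνsub 0 g
      rwa [zero_sub, hν00, zero_add] at this
    have h2 : ν g ≤ ν (-g) := by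
      have := hνsub 0 (-g)
      rwa [zero_sub, neg_neg, hν00, zero_add] at this
    exact le_antisymm h1 h2
  have hνadd : ∀ g h : G, ν (g + h) ≤ ν g + ν h := by
    intro g h
    have := hνsub g (-h)
    rwa [sub_neg_eq_add, hνneg] at this
  -- partial sums
  set S : ℕ → G := fun n => ∑ i ∈ Finset.range n, x i with hSdef
  -- bound on differences of partial sums
  have hSdiff : ∀ n k : ℕ,
      ν (S (n + k) - S n) ≤ (∑ j ∈ Finset.range k, r ^ (n + j)) * M := by
    intro n k
    induction k with
    | zero =>
      simp only [Nat.add_zero, sub_self, hν00, Finset.range_zero, Finset.sum_empty, zero_mul,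
        le_refl]
    | succ k ih =>
      have heq : S (n + (k+1)) - S n = (S (n + k) - S n) + x (n + k) := by
        simp only [hSdef, ← Nat.add_assoc, Finset.sum_range_succ]
        abel
      calc ν (S (n + (k+1)) - S n) ≤ ν (S (n + k) - S n) + ν (x (n + k)) := by
            rw [heq]; exact hνadd _ _
      _ ≤ (∑ j ∈ Finset.range k, r ^ (n + j)) * M + r ^ (n + k) * M :=
          hlp_add_le_add hadd ih (hxn (n + k))
      _ = (∑ j ∈ Finset.range (k+1), r ^ (n + j)) * M := by
          rw [Finset.sum_range_succ, add_mul]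
  -- geometric sum identity
  have hgeom : ∀ k : ℕ, (∑ j ∈ Finset.range k, r ^ j) = (1 - r ^ k) * u := by
    intro k
    have h1 : (∑ j ∈ Finset.range k, r ^ j) * (1 - r) = 1 - r ^ k := by
      have := geom_sum_mul r k
      calc (∑ j ∈ Finset.range k, r ^ j) * (1 - r)
          = -((∑ j ∈ Finset.range k, r ^ j) * (r - 1)) := by ring
      _ = -(r ^ k - 1) := by rw [this]
      _ = 1 - r ^ k := by ring
    calc (∑ j ∈ Finset.range k, r ^ j)
        = (∑ j ∈ Finset.range k, r ^ j) * ((1 - r) * u) := by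
          rw [mul_comm (1-r) u, hu, mul_one]
    _ = ((∑ j ∈ Finset.range k, r ^ j) * (1 - r)) * u := by ring
    _ = (1 - r ^ k) * u := by rw [h1]
  -- the key bound: ν (S (n+k) - S n) ≤ (u * M) * r ^ n
  have hkey : ∀ n k : ℕ, ν (S (n + k) - S n) ≤ (u * M) * r ^ n := by
    intro n k
    have h1 : (∑ j ∈ Finset.range k, r ^ (n + j))
        = (∑ j ∈ Finset.range k, r ^ j) * r ^ n := by
      rw [Finset.sum_mul]
      apply Finset.sum_congr rfl
      intro j _
      rw [← pow_add, Nat.add_comm]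
    have hneg : -r ^ k ≤ (0:R) := by
      have := hlp_add_le hadd (-r ^ k) (hpow_nonneg k)
      simpa using this
    have h2 : (1 - r ^ k : R) ≤ 1 :=
      calc (1 - r ^ k : R) = -r ^ k + 1 := by ring
        _ ≤ 0 + 1 := hlp_add_le hadd 1 hneg
        _ = 1 := by ring
    have h4 : (1 - r ^ k) * u ≤ u := by
      have := hlp_mul_le hmul h2 (le_of_lt hu_pos)
      rwa [one_mul] at this
    have hsum_le : (∑ j ∈ Finset.range k, r ^ (n + j)) ≤ u * r ^ n := by
      rw [h1, hgeom k]
      exact hlp_mul_le hmul h4 (hpow_nonneg n)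
    calc ν (S (n + k) - S n) ≤ (∑ j ∈ Finset.range k, r ^ (n + j)) * M := hSdiff n k
      _ ≤ (u * r ^ n) * M := hlp_mul_le hmul hsum_le (le_of_lt hMpos)
      _ = (u * M) * r ^ n := by ring
  -- Cauchy
  have hcauchy : ∀ ε : R, 0 < ε → ∃ N : ℕ, ∀ m n : ℕ, m ≥ N → n ≥ N →
      ν (S m - S n) < ε := by
    intro ε hε
    have huM : 0 < u * M := hlp_mul_pos hmul hu_pos hMpos
    obtain ⟨αl, αr, hαl, hαr, hr1, hl1⟩ := hshrink ε (u * M) hε huM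
    obtain ⟨N, hN⟩ := hr0 αr hαr
    refine ⟨N, fun m n hm hn => ?_⟩
    -- wlog n ≤ m
    have main : ∀ p q : ℕ, p ≥ N → q ≥ p → ν (S q - S p) < ε := by
      intro p q hp hpq
      obtain ⟨k, rfl⟩ := Nat.le.dest hpq
      have h1 : ν (S (p + k) - S p) ≤ (u * M) * r ^ p := hkey p k
      have h2 : r ^ p < αr := by
        have := hN p hp
        simp only [sub_zero] at this
        exact lt_of_le_of_lt (le_max_left _ _) this
      have h3 : (u * M) * r ^ p < (u * M) * αr := by
        have := hmul (r ^ p) αr (u * M) h2 huM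
        rwa [mul_comm (r^p) (u*M), mul_comm αr (u*M)] at this
      exact lt_of_le_of_lt h1 (lt_trans h3 hr1)
    rcases le_total n m with h | h
    · exact main n m hn h
    · have : ν (S m - S n) = ν (S n - S m) := by
        rw [← hνneg (S m - S n), neg_sub]
      rw [this]
      exact main m n hm h
  obtain ⟨l, hl⟩ := hcomplete S hcauchy
  exact ⟨l, hl⟩
end
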